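/- (Lovász) Two digraphs on finite vertex types are isomorphic if and only if they admit the same number of incoming homomorphisms from every digraph on a finite vertex type. Precisely: for finite types α₁, α₂ with binary relations E₁ : α₁ → α₁ → Prop and E₂ : α₂ → α₂ → Prop, there exists a digraph isomorphism between (α₁,E₁) and (α₂,E₂) if and only if for every finite type γ and every relation E : γ → γ → Prop, the number of homomorphisms from (γ,E) to (α₁,E₁) equals the number of homomorphisms from (γ,E) to (α₂,E₂). -/

import Mathlib

namespace DDS

/-- A homomorphism of digraphs `(γ, E) → (δ, E')` is a map preserving edges. -/
def IsHom {γ : Type*} {δ : Type*} (E : γ → γ → Prop) (E' : δ → δ → Prop) (τ : γ → δ) : Prop :=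
  ∀ ⦃u v⦄, E u v → E' (τ u) (τ v)

/-- Two digraphs are isomorphic if there is an edge-preserving (in both directions) bijection. -/
def Isomorphic {γ : Type*} {δ : Type*} (E : γ → γ → Prop) (E' : δ → δ → Prop) : Prop :=
  ∃ e : γ ≃ δ, ∀ u v, E u v ↔ E' (e u) (e v)

/-- The number of digraph homomorphisms from `(γ, E)` to `(δ, E')`. -/
noncomputable def homCount (γ : Type*) (δ : Type*) (E : γ → γ → Prop) (E' : δ → δ → Prop) : ℕ :=
  Nat.card {τ : γ → δ // IsHom E E' τ}

/-- An in-tree: a root and a parent map such that the root is a fixed point and every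
vertex reaches the root by iterating the parent map. -/
structure InTree (V : Type*) where
  root : V
  parent : V → V
  parent_root : parent root = root
  reaches_root : ∀ v, ∃ k, parent^[k] v = root

namespace InTree

variable {V : Type*}

/-- Edges of an in-tree are directed towards the root. -/
def Edge (T : InTree V) (v w : V) : Prop := v ≠ T.root ∧ w = T.parent v

/-- The height of a vertex: the least `k` with `parent^[k] v = root`. -/
noncomputable def height (T : InTree V) (v : V) : ℕ := sInf {k | T.parent^[k] v = T.root}

lemma height_spec (T : InTree V) (v : V) : T.parent^[T.height v] v = T.root :=
  Nat.sInf_mem (T.reaches_root v)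

@[simp] lemma height_root (T : InTree V) : T.height T.root = 0 :=
  Nat.sInf_eq_zero.mpr (Or.inl (by simp))

lemma height_eq_zero_iff (T : InTree V) {v : V} : T.height v = 0 ↔ v = T.root := by
  constructor
  · intro h
    have hs := T.height_spec v
    rw [h] at hs
    simpa using hs
  · rintro rfl
    exact T.height_root

lemma height_parent (T : InTree V) {v : V} (hv : v ≠ T.root) :
    T.height v = T.height (T.parent v) + 1 := by
  have h1 : T.height v ≠ 0 := fun h => hv (T.height_eq_zero_iff.mp h)
  obtain ⟨m, hm⟩ := Nat.exists_eq_succ_of_ne_zero h1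
  have hsp : T.parent^[T.height v] v = T.root := T.height_spec v
  rw [hm, Function.iterate_succ_apply] at hsp
  have hle : T.height (T.parent v) ≤ m := Nat.sInf_le hsp
  have hge : T.height v ≤ T.height (T.parent v) + 1 := by
    apply Nat.sInf_le
    show T.parent^[T.height (T.parent v) + 1] v = T.root
    rw [Function.iterate_succ_apply]
    exact T.height_spec (T.parent v)
  omega

lemma height_parent_le (T : InTree V) (v : V) : T.height (T.parent v) ≤ T.height v := by
  by_cases hv : v = T.root
  · subst hv; rw [T.parent_root]
  · rw [T.height_parent hv]; omega

/-- The height of a finite in-tree: the maximum height of a vertex. -/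
noncomputable def treeHeight [Fintype V] (T : InTree V) : ℕ := Finset.univ.sup T.height

section Star

variable {V₁ V₂ : Type*} (T₁ : InTree V₁) (T₂ : InTree V₂)

/-- Vertices of the `⋆` product: pairs of vertices of equal height. -/
def StarVertex := {x : V₁ × V₂ // T₁.height x.1 = T₂.height x.2}

lemma star_parent_mem (x : V₁ × V₂) (hx : T₁.height x.1 = T₂.height x.2) :
    T₁.height (T₁.parent x.1) = T₂.height (T₂.parent x.2) := by
  by_cases h : x.1 = T₁.root
  · have h2 : x.2 = T₂.root := by
      apply T₂.height_eq_zero_iff.mp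
      rw [← hx, h, T₁.height_root]
    rw [h, h2, T₁.parent_root, T₂.parent_root, T₁.height_root, T₂.height_root]
  · have h2 : x.2 ≠ T₂.root := by
      intro hc
      apply h
      apply T₁.height_eq_zero_iff.mp
      rw [hx, hc, T₂.height_root]
    have e1 := T₁.height_parent h
    have e2 := T₂.height_parent h2
    omega

/-- The parent map of the `⋆` product. -/
def starParent (x : StarVertex T₁ T₂) : StarVertex T₁ T₂ :=
  ⟨(T₁.parent x.1.1, T₂.parent x.1.2), star_parent_mem T₁ T₂ x.1 x.2⟩

lemma starParent_iterate (k : ℕ) (x : StarVertex T₁ T₂) :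
    ((starParent T₁ T₂)^[k] x).1 = (T₁.parent^[k] x.1.1, T₂.parent^[k] x.1.2) := by
  induction k generalizing x with
  | zero => simp
  | succ k ih =>
      rw [Function.iterate_succ_apply, Function.iterate_succ_apply,
        Function.iterate_succ_apply, ih]
      rfl

/-- The `⋆` product of two in-trees. -/
def star : InTree (StarVertex T₁ T₂) where
  root := ⟨(T₁.root, T₂.root), by simp⟩
  parent := starParent T₁ T₂
  parent_root := by
    apply Subtype.ext
    show (T₁.parent T₁.root, T₂.parent T₂.root) = (T₁.root, T₂.root)
    rw [T₁.parent_root, T₂.parent_root]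
  reaches_root := by
    intro x
    refine ⟨T₁.height x.1.1, Subtype.ext ?_⟩
    rw [starParent_iterate]
    have h1 : T₁.parent^[T₁.height x.1.1] x.1.1 = T₁.root := T₁.height_spec _
    have h2 : T₂.parent^[T₁.height x.1.1] x.1.2 = T₂.root := by
      rw [x.2]; exact T₂.height_spec _
    show (_, _) = (T₁.root, T₂.root)
    rw [h1, h2]

end Star

section Cut

variable (T : InTree V) (t : ℕ)

/-- Vertices of the cut at level `t`: vertices of height at most `t`. -/
def CutVertex := {v : V // T.height v ≤ t}

/-- The parent map of the cut. -/
def cutParent (x : CutVertex T t) : CutVertex T t :=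
  ⟨T.parent x.1, le_trans (T.height_parent_le x.1) x.2⟩

lemma cutParent_iterate (k : ℕ) (x : CutVertex T t) :
    ((cutParent T t)^[k] x).1 = T.parent^[k] x.1 := by
  induction k generalizing x with
  | zero => simp
  | succ k ih =>
      rw [Function.iterate_succ_apply, Function.iterate_succ_apply, ih]
      rfl

/-- The cut of an in-tree at level `t`: the sub-in-tree induced on vertices of height `≤ t`. -/
def cut : InTree (CutVertex T t) where
  root := ⟨T.root, by simp⟩
  parent := cutParent T t
  parent_root := Subtype.ext T.parent_root
  reaches_root := fun x =>
    ⟨T.height x.1, Subtype.ext (by rw [cutParent_iterate]; exact T.height_spec x.1)⟩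

end Cut

end InTree

section Unroll

variable {α : Type*} (f : α → α) (v : α)

/-- Vertices of the unroll of the functional graph of `f` from `v`. -/
def UnrollVertex := {ui : α × ℕ // f^[ui.2] ui.1 = v}

/-- The parent map of the unroll: `(u, i+1) ↦ (f u, i)`, fixing the root `(v, 0)`. -/
def unrollParent : UnrollVertex f v → UnrollVertex f v
  | ⟨(u, 0), h⟩ => ⟨(u, 0), h⟩
  | ⟨(u, i+1), h⟩ => ⟨(f u, i), by rw [← Function.iterate_succ_apply]; exact h⟩

lemma unrollParent_iterate :
    ∀ (i : ℕ) (u : α) (h : f^[i] u = v),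
      (unrollParent f v)^[i] ⟨(u, i), h⟩ = ⟨(v, 0), rfl⟩ := by
  intro i
  induction i with
  | zero =>
      intro u h
      have hu : u = v := by simpa using h
      subst hu
      rfl
  | succ i ih =>
      intro u h
      erw [Function.iterate_succ_apply]
      show (unrollParent f v)^[i] ⟨(f u, i), _⟩ = _
      exact ih (f u) _

/-- The unroll of the functional graph of `f : α → α` from the point `v`. -/
def unroll : InTree (UnrollVertex f v) where
  root := ⟨(v, 0), rfl⟩
  parent := unrollParent f v
  parent_root := rfl
  reaches_root := fun x => ⟨x.1.2, by
    obtain ⟨⟨u, i⟩, h⟩ := x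
    exact unrollParent_iterate f v i u h⟩

end Unroll

section FG

/-- The number of periodic points of `f`. -/
noncomputable def periodicCount {α : Type*} (f : α → α) : ℕ :=
  Nat.card {x : α // ∃ n, 1 ≤ n ∧ f^[n] x = x}

/-- A functional graph is connected if the equivalence relation generated by
`x ∼ f x` relates all pairs of points. -/
def FGConnected {α : Type*} (f : α → α) : Prop :=
  ∀ x y : α, Relation.EqvGen (fun u w => f u = w) x y

/-- Isomorphism of functional graphs. -/
def FGIso {α β : Type*} (f : α → α) (g : β → β) : Prop :=
  ∃ e : α ≃ β, ∀ x, e (f x) = g (e x)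

/-- The product of two functional graphs. -/
def prodMap {α γ : Type*} (f : α → α) (h : γ → γ) : α × γ → α × γ :=
  fun z => (f z.1, h z.2)

/-- `FGContains f h g` means the functional graph of `g` is (isomorphic to) a union of
connected components of the product `f × h`. -/
def FGContains {α γ β : Type*} (f : α → α) (h : γ → γ) (g : β → β) : Prop :=
  ∃ e : β → α × γ, Function.Injective e ∧ e ∘ g = prodMap f h ∘ e ∧
    ∀ z, prodMap f h z ∈ Set.range e → z ∈ Set.range e

end FG

end DDS

/-!
Every homomorphism `τ : G → H` factors uniquely through the quotient map `G → G/ker τ` followed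
by an injective homomorphism, so `hom(G, H) = ∑_θ inj(G/θ, H)` over all equivalence relations `θ`
on the vertices of `G`. Proper quotients have fewer vertices, hence by strong induction equal
hom-counts into `H₁` and `H₂` give equal inj-counts from every `G`. Taking `G = H₁` and `G = H₂`,
whose identity maps are injective, yields injective homomorphisms `H₁ → H₂ → H₁`; these force
equal numbers of vertices and of edges, so either one is an isomorphism.
-/

instance Setoid.instFinite {α : Type*} [Finite α] : Finite (Setoid α) :=
  Finite.of_injective (fun s : Setoid α => (s : α → α → Prop)) fun _ _ h =>
    Setoid.ext fun a b => iff_of_eq (congrFun₂ h a b)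

namespace DDS

open Function

universe u

variable {α γ γ' δ δ' : Type*} {E : γ → γ → Prop} {F : δ → δ → Prop}

noncomputable def injCount (γ δ : Type*) (E : γ → γ → Prop) (F : δ → δ → Prop) : ℕ :=
  Nat.card {τ : γ → δ // IsHom E F τ ∧ Injective τ}

def quotientEdge (s : Setoid γ) (E : γ → γ → Prop) : Quotient s → Quotient s → Prop :=
  Relation.Map E (Quotient.mk s) (Quotient.mk s)

theorem card_quotient_lt [Finite α] {s : Setoid α} (hs : s ≠ ⊥) :
    Nat.card (Quotient s) < Nat.card α := by
  refine (Nat.card_le_card_of_surjective _ Quotient.mk_surjective).lt_of_ne fun h => hs ?_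
  rw [← Setoid.ker_mk_eq s, Setoid.ker_eq_bot_iff]
  exact (Quotient.mk_surjective.bijective_of_nat_card_le h.ge).1

theorem isHom_comp_symm_iff {E' : γ' → γ' → Prop} (e : γ ≃ γ')
    (he : ∀ u v, E u v ↔ E' (e u) (e v)) (τ : γ → δ) :
    IsHom E' F (τ ∘ e.symm) ↔ IsHom E F τ := by
  refine ⟨fun hτ u v h => by simpa using hτ ((he u v).1 h), fun hτ u v h => hτ ?_⟩
  rwa [he, e.apply_symm_apply, e.apply_symm_apply]

theorem homCount_congr_left {E' : γ' → γ' → Prop} (h : Isomorphic E E') :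
    homCount γ δ E F = homCount γ' δ E' F := by
  obtain ⟨e, he⟩ := h
  exact Nat.card_congr <| (e.arrowCongr (Equiv.refl δ)).subtypeEquiv fun τ =>
    (isHom_comp_symm_iff e he τ).symm

theorem homCount_congr_right {F' : δ' → δ' → Prop} (h : Isomorphic F F') :
    homCount γ δ E F = homCount γ δ' E F' := by
  obtain ⟨e, he⟩ := h
  refine Nat.card_congr <| ((Equiv.refl γ).arrowCongr e).subtypeEquiv fun τ => ?_
  simp only [IsHom, Equiv.arrowCongr_apply, Equiv.refl_symm, Equiv.refl_apply, comp_apply, ← he]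

theorem isHom_quotientEdge_iff {s : Setoid γ} {ψ : Quotient s → δ} :
    IsHom (quotientEdge s E) F ψ ↔ IsHom E F (ψ ∘ Quotient.mk s) :=
  ⟨fun hψ _ _ h => hψ ⟨_, _, h, rfl, rfl⟩, by rintro hτ _ _ ⟨u, v, h, rfl, rfl⟩; exact hτ h⟩

def homKerEquiv (s : Setoid γ) :
    {τ : {τ : γ → δ // IsHom E F τ} // Setoid.ker τ.1 = s} ≃
      {ψ : Quotient s → δ // IsHom (quotientEdge s E) F ψ ∧ Injective ψ} where
  toFun τ := ⟨Quotient.lift τ.1.1 τ.2.ge, isHom_quotientEdge_iff.2 τ.1.2,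
    (Setoid.lift_injective_iff_ker_eq_of_le _).2 τ.2⟩
  invFun ψ := ⟨⟨ψ.1 ∘ Quotient.mk s, isHom_quotientEdge_iff.1 ψ.2.1⟩, by
    ext a b
    exact ψ.2.2.eq_iff.trans Quotient.eq⟩
  left_inv _ := rfl
  right_inv _ := Subtype.ext <| funext fun q => Quotient.inductionOn q fun _ => rfl

theorem homCount_eq_injCount_add_sum [Finite γ] [Finite δ] [Fintype (Setoid γ)]
    [DecidableEq (Setoid γ)] :
    homCount γ δ E F = injCount γ δ E F +
      ∑ s ∈ {⊥}ᶜ, injCount (Quotient s) δ (quotientEdge s E) F := by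
  rw [homCount, ← Nat.card_congr (Equiv.sigmaFiberEquiv fun τ : {τ // IsHom E F τ} =>
    Setoid.ker τ.1), Nat.card_sigma, Fintype.sum_eq_add_sum_compl ⊥]
  congr 1
  · simp only [Setoid.ker_eq_bot_iff]
    exact Nat.card_congr (Equiv.subtypeSubtypeEquivSubtypeInter _ _)
  · exact Finset.sum_congr rfl fun s _ => Nat.card_congr (homKerEquiv s)

variable {α₁ α₂ : Type*} {E₁ : α₁ → α₁ → Prop} {E₂ : α₂ → α₂ → Prop}

/-- Sources in one universe suffice: every finite `γ` is isomorphic to a digraph on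
`ULift.{u} (Fin n)`. -/
theorem homCount_eq_of_forall_univ
    (H : ∀ (γ : Type u) [Fintype γ] (E : γ → γ → Prop),
      homCount γ α₁ E E₁ = homCount γ α₂ E E₂)
    (γ : Type*) [Finite γ] (E : γ → γ → Prop) :
    homCount γ α₁ E E₁ = homCount γ α₂ E E₂ := by
  let e : γ ≃ ULift.{u} (Fin (Nat.card γ)) := (Finite.equivFin γ).trans Equiv.ulift.symm
  have he : Isomorphic E fun a b => E (e.symm a) (e.symm b) := ⟨e, by simp⟩
  rw [homCount_congr_left he, homCount_congr_left he]
  exact H _ _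

theorem injCount_eq_of_forall_homCount_eq [Finite α₁] [Finite α₂]
    (H : ∀ (γ : Type u) [Fintype γ] (E : γ → γ → Prop),
      homCount γ α₁ E E₁ = homCount γ α₂ E E₂)
    (γ : Type*) [Finite γ] (E : γ → γ → Prop) : injCount γ α₁ E E₁ = injCount γ α₂ E E₂ := by
  induction hn : Nat.card γ using Nat.strong_induction_on generalizing γ with
  | _ n ih =>
  classical
  have := Fintype.ofFinite (Setoid γ)
  have hquot : ∀ s ∈ ({⊥}ᶜ : Finset (Setoid γ)),
      injCount (Quotient s) α₁ (quotientEdge s E) E₁ =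
        injCount (Quotient s) α₂ (quotientEdge s E) E₂ :=
    fun s hs => ih _ (hn ▸ card_quotient_lt (by simpa using hs)) _ _ rfl
  have hγ := homCount_eq_of_forall_univ H γ E
  rw [homCount_eq_injCount_add_sum, homCount_eq_injCount_add_sum,
    Finset.sum_congr rfl hquot] at hγ
  exact Nat.add_right_cancel hγ

def IsHom.edgeMap {f : γ → δ} (hf : IsHom E F f) :
    {p : γ × γ // E p.1 p.2} → {q : δ × δ // F q.1 q.2} :=
  fun p => ⟨Prod.map f f p.1, hf p.2⟩

theorem IsHom.edgeMap_injective {f : γ → δ} (hf : IsHom E F f) (hfi : Injective f) :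
    Injective hf.edgeMap :=
  fun _ _ h => Subtype.ext (hfi.prodMap hfi (congrArg Subtype.val h))

theorem isomorphic_of_injective_isHom [Finite γ] [Finite δ] {f : γ → δ} (hf : IsHom E F f)
    (hfi : Injective f) {g : δ → γ} (hg : IsHom F E g) (hgi : Injective g) : Isomorphic E F := by
  have hbij : Bijective f := hfi.bijective_of_nat_card_le (Nat.card_le_card_of_injective g hgi)
  have hedge : Surjective hf.edgeMap :=
    ((hf.edgeMap_injective hfi).bijective_of_nat_card_le
      (Nat.card_le_card_of_injective _ (hg.edgeMap_injective hgi))).2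
  refine ⟨Equiv.ofBijective f hbij, fun u v => ⟨fun h => hf h, fun h => ?_⟩⟩
  obtain ⟨⟨⟨a, b⟩, hab⟩, heq⟩ := hedge ⟨(f u, f v), h⟩
  obtain ⟨rfl, rfl⟩ : a = u ∧ b = v :=
    Prod.mk_inj.1 (hfi.prodMap hfi (congrArg Subtype.val heq))
  exact hab

theorem exists_injective_isHom_of_injCount_eq [Finite γ] [Finite δ]
    (h : injCount γ γ E E = injCount γ δ E F) : ∃ f : γ → δ, IsHom E F f ∧ Injective f := by
  have hid : injCount γ γ E E ≠ 0 :=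
    Nat.card_ne_zero.2 ⟨⟨id, fun _ _ h => h, injective_id⟩, inferInstance⟩
  rw [h] at hid
  obtain ⟨⟨f, hf⟩, -⟩ := Nat.card_ne_zero.1 hid
  exact ⟨f, hf⟩

end DDS

open DDS

/-- **Lovász.** Two digraphs on finite vertex types are isomorphic iff they admit the same
number of incoming homomorphisms from every digraph on a finite vertex type. -/
theorem lovasz_digraph {α₁ α₂ : Type*} [Fintype α₁] [Fintype α₂]
    (E₁ : α₁ → α₁ → Prop) (E₂ : α₂ → α₂ → Prop) :
    Isomorphic E₁ E₂ ↔
      ∀ (γ : Type*) [Fintype γ] (E : γ → γ → Prop),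
        homCount γ α₁ E E₁ = homCount γ α₂ E E₂ := by
  refine ⟨fun h γ _ E => homCount_congr_right h, fun H => ?_⟩
  obtain ⟨f, hf, hfi⟩ :=
    exists_injective_isHom_of_injCount_eq (injCount_eq_of_forall_homCount_eq H α₁ E₁)
  obtain ⟨g, hg, hgi⟩ :=
    exists_injective_isHom_of_injCount_eq (injCount_eq_of_forall_homCount_eq H α₂ E₂).symm
  exact isomorphic_of_injective_isHom hf hfi hg hgi
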